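/- The pointwise distortion δ(s) is strictly increasing in |s| on [0, 1/2): if |s'| < |s| then δ(s') < δ(s). Consequently, for a signal vector s ∈ [-a, a]^D with 0 < a < 1/2 and i.i.d. coordinate noise N(0, σ²), the total MSE δ(s) = Σ_d δ(s_d) satisfies D·δ(0) ≤ δ(s) ≤ D·δ(a), with the minimum attained at s = 0 and the maximum at the corners {−a, a}^D. -/
import Mathlib


open MeasureTheory

/-- Zero-centered modulo: `x mod 1 := x - ⌊x + 1/2⌋`. -/
noncomputable def zmod1 (x : ℝ) : ℝ := x - ⌊x + (1 : ℝ) / 2⌋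

/-- Density `φ_σ` of `N(0, σ²)`. -/
noncomputable def gpdf (σ x : ℝ) : ℝ :=
  (Real.sqrt (2 * Real.pi) * σ)⁻¹ * Real.exp (-(x ^ 2) / (2 * σ ^ 2))

/-- Pointwise per-dimension distortion `δ(s) = E[(((s + n) mod 1) - s)²]`, `n ~ N(0, σ²)`. -/
noncomputable def delta (σ s : ℝ) : ℝ := ∫ n : ℝ, (zmod1 (s + n) - s) ^ 2 * gpdf σ n

lemma zmod1_eq_sub_round (x : ℝ) : zmod1 x = x - round x := by
  rw [zmod1, round_eq]

lemma abs_zmod1_le (x : ℝ) : |zmod1 x| ≤ 1 / 2 := by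
  rw [zmod1_eq_sub_round]; exact abs_sub_round x

lemma gpdf_pos {σ : ℝ} (hσ : 0 < σ) (x : ℝ) : 0 < gpdf σ x := by
  apply mul_pos
  · exact inv_pos.2 (mul_pos (Real.sqrt_pos.2 (by positivity)) hσ)
  · exact Real.exp_pos _

lemma gpdf_neg (σ x : ℝ) : gpdf σ (-x) = gpdf σ x := by simp [gpdf]

lemma integrable_gpdf {σ : ℝ} (hσ : 0 < σ) : Integrable (gpdf σ) := by
  have h : Integrable (fun x : ℝ => Real.exp (-(1/(2*σ^2)) * x ^ 2)) :=
    integrable_exp_neg_mul_sq (by positivity)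
  have := h.const_mul ((Real.sqrt (2 * Real.pi) * σ)⁻¹)
  refine this.congr (Filter.Eventually.of_forall fun x => ?_)
  simp only [gpdf]
  ring_nf

lemma measurable_zmod1 : Measurable zmod1 := by
  unfold zmod1
  exact measurable_id.sub (measurable_from_top.comp (Int.measurable_floor.comp (measurable_id.add_const _)))

lemma continuous_gpdf (σ : ℝ) : Continuous (gpdf σ) := by
  unfold gpdf; fun_prop

lemma integrable_f {σ : ℝ} (hσ : 0 < σ) (s : ℝ) :
    Integrable (fun n : ℝ => (zmod1 (s + n) - s) ^ 2 * gpdf σ n) := by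
  refine Integrable.mono' (((integrable_gpdf hσ).const_mul ((1/2 + |s|)^2))) ?_ ?_
  · exact ((((measurable_zmod1.comp (measurable_const.add measurable_id)).sub
      measurable_const).pow_const 2).mul (continuous_gpdf σ).measurable).aestronglyMeasurable
  · refine Filter.Eventually.of_forall fun n => ?_
    have h1 : |zmod1 (s + n) - s| ≤ 1/2 + |s| := by
      calc |zmod1 (s + n) - s| ≤ |zmod1 (s + n)| + |s| := abs_sub _ _
        _ ≤ 1/2 + |s| := by linarith [abs_zmod1_le (s + n)]
    have h2 : (zmod1 (s + n) - s) ^ 2 ≤ (1/2 + |s|)^2 := by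
      rw [← sq_abs]
      exact pow_le_pow_left₀ (abs_nonneg _) h1 2
    have h3 : 0 ≤ gpdf σ n := (gpdf_pos hσ n).le
    rw [Real.norm_eq_abs, abs_mul, abs_of_nonneg (sq_nonneg _), abs_of_nonneg h3]
    exact mul_le_mul_of_nonneg_right h2 h3

lemma zmod1_shift (t n : ℝ) : zmod1 (t + n) - t = n - ⌊t + n + 1/2⌋ := by
  rw [zmod1]; ring

lemma zmod1_neg {x : ℝ} (h : ∀ k : ℤ, x + 1/2 ≠ k) : zmod1 (-x) = -zmod1 x := by
  have hfl : ⌊-x + 1/2⌋ = -⌊x + 1/2⌋ := by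
    rw [Int.floor_eq_iff]
    have h1 : (⌊x + 1/2⌋ : ℝ) ≤ x + 1/2 := Int.floor_le _
    have h2 : x + 1/2 < ⌊x + 1/2⌋ + 1 := Int.lt_floor_add_one _
    have h3 : (⌊x + 1/2⌋ : ℝ) ≠ x + 1/2 := fun hc => h _ hc.symm
    have h4 : (⌊x + 1/2⌋ : ℝ) < x + 1/2 := lt_of_le_of_ne h1 h3
    constructor <;> push_cast <;> linarith
  rw [zmod1, zmod1, hfl]
  push_cast
  ring

lemma delta_neg (σ s : ℝ) : delta σ (-s) = delta σ s := by
  have h := integral_neg_eq_self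
    (fun n : ℝ => (zmod1 (-s + n) - (-s)) ^ 2 * gpdf σ n) (volume : Measure ℝ)
  rw [delta, ← h, delta]
  refine integral_congr_ae ?_
  have hnull : (volume : Measure ℝ) {n : ℝ | ∃ k : ℤ, s + n + 1/2 = k} = 0 := by
    have hc : Set.Countable {n : ℝ | ∃ k : ℤ, s + n + 1/2 = k} := by
      refine (Set.countable_range (fun k : ℤ => (k : ℝ) - s - 1/2)).mono ?_
      rintro n ⟨k, hk⟩
      exact ⟨k, by linarith⟩
    exact hc.measure_zero _
  refine (ae_iff.2 ?_)
  refine measure_mono_null ?_ hnull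
  intro n hn
  simp only [Set.mem_setOf_eq] at hn ⊢
  by_contra hcon
  push_neg at hcon
  apply hn
  have hz : zmod1 (-s + -n) = -zmod1 (s + n) := by
    have : -s + -n = -(s + n) := by ring
    rw [this]
    exact zmod1_neg (fun k hk => hcon k (by linarith))
  rw [hz, gpdf_neg]
  ring

lemma delta_abs (σ s : ℝ) : delta σ s = delta σ |s| := by
  rcases abs_cases s with ⟨h, _⟩ | ⟨h, _⟩
  · rw [h]
  · rw [h, delta_neg]

lemma delta_strict {σ : ℝ} (hσ : 0 < σ) {s' s : ℝ} (h0 : 0 ≤ s') (h1 : s' < s)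
    (h2 : s < 1/2) : delta σ s' < delta σ s := by
  set f : ℝ → ℝ → ℝ := fun t n => (zmod1 (t + n) - t) ^ 2 * gpdf σ n with hf
  have hint : ∀ t, Integrable (f t) := fun t => integrable_f hσ t
  have hsub : delta σ s - delta σ s' = ∫ n, (f s n - f s' n) :=
    (integral_sub (hint s) (hint s')).symm
  set g : ℝ → ℝ := fun n => f s n - f s' n with hg
  have hgeq : ∀ n, g n = (((n : ℝ) - ⌊s + n + 1/2⌋) ^ 2
      - ((n : ℝ) - ⌊s' + n + 1/2⌋) ^ 2) * gpdf σ n := by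
    intro n
    simp only [hg, hf, zmod1_shift]
    ring
  have hnonneg : ∀ n, 0 ≤ g n := by
    intro n
    rw [hgeq]
    set k := ⌊s + n + 1/2⌋ with hk
    set k' := ⌊s' + n + 1/2⌋ with hk'
    have hle : k' ≤ k := Int.floor_le_floor (by linarith)
    have hle2 : k ≤ k' + 1 := by
      have h3 : s + n + 1/2 ≤ s' + n + 1/2 + 1 := by linarith
      have h4 := Int.floor_le_floor h3
      rwa [Int.floor_add_one, ← hk', ← hk] at h4
    rcases eq_or_lt_of_le hle with heq | hlt
    · rw [← heq]; simp
    · have hkk : k = k' + 1 := le_antisymm hle2 hlt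
      have hstrict : (k : ℝ) > s' + n + 1/2 := by
        rw [hkk]
        push_cast
        have := Int.lt_floor_add_one (s' + n + 1/2)
        rw [← hk'] at this
        linarith
      have hnk : n - (k : ℝ) < -1/2 - s' := by linarith
      have hk'r : (k' : ℝ) = (k : ℝ) - 1 := by rw [hkk]; push_cast; ring
      rw [hk'r]
      have : 0 ≤ (n - (k:ℝ)) ^ 2 - (n - ((k:ℝ) - 1)) ^ 2 := by nlinarith
      exact mul_nonneg this (gpdf_pos hσ n).le
  have hpos : ∀ n ∈ Set.Ioo (-(1/2) - s) (-(1/2) - s'), 0 < g n := by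
    intro n hn
    obtain ⟨hn1, hn2⟩ := hn
    have hfl1 : ⌊s + n + 1/2⌋ = 0 := by
      rw [Int.floor_eq_zero_iff]
      exact Set.mem_Ico.2 ⟨by linarith, by linarith⟩
    have hfl2 : ⌊s' + n + 1/2⌋ = -1 := by
      rw [Int.floor_eq_iff]
      constructor <;> push_cast <;> linarith
    rw [hgeq, hfl1, hfl2]
    push_cast
    have hgp := gpdf_pos hσ n
    nlinarith
  have hgint : Integrable g := (hint s).sub (hint s')
  have hmain : 0 < ∫ n, g n := by
    rw [integral_pos_iff_support_of_nonneg hnonneg hgint]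
    have hsub2 : Set.Ioo (-(1/2) - s) (-(1/2) - s') ⊆ Function.support g := by
      intro n hn
      exact (hpos n hn).ne'
    calc (0 : ENNReal) < volume (Set.Ioo (-(1/2) - s) (-(1/2) - s')) := by
          rw [Real.volume_Ioo]
          apply ENNReal.ofReal_pos.2
          linarith
      _ ≤ volume (Function.support g) := measure_mono hsub2
  have hfin : 0 < delta σ s - delta σ s' := by rw [hsub]; exact hmain
  linarith

/-- The pointwise distortion is strictly increasing in `|s|` on `[0, 1/2)`, and for a signal
vector `s ∈ [-a, a]^D` with `0 < a < 1/2` under i.i.d. coordinate noise `N(0, σ²)`, the total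
MSE `Σ_d δ(s_d)` satisfies `D·δ(0) ≤ Σ_d δ(s_d) ≤ D·δ(a)`, with the minimum attained at
`s = 0` and the maximum at the corners `{-a, a}^D`. -/
theorem distortion_monotone_and_bounds (σ : ℝ) (hσ : 0 < σ) :
    (∀ s s' : ℝ, |s| < 1 / 2 → |s'| < |s| → delta σ s' < delta σ s) ∧
    (∀ (D : ℕ) (a : ℝ), 0 < a → a < 1 / 2 →
      ∀ s : Fin D → ℝ, (∀ d, s d ∈ Set.Icc (-a) a) →
        ((D : ℝ) * delta σ 0 ≤ ∑ d, delta σ (s d) ∧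
          ∑ d, delta σ (s d) ≤ (D : ℝ) * delta σ a)) ∧
    (∀ (D : ℕ) (a : ℝ), 0 < a → a < 1 / 2 →
      ((∑ _d : Fin D, delta σ 0) = (D : ℝ) * delta σ 0 ∧
        ∀ s : Fin D → ℝ, (∀ d, s d = a ∨ s d = -a) →
          ∑ d, delta σ (s d) = (D : ℝ) * delta σ a)) := by
  have mono : ∀ s s' : ℝ, |s| < 1 / 2 → |s'| < |s| → delta σ s' < delta σ s := by
    intro s s' hs hs'
    rw [delta_abs σ s', delta_abs σ s]
    exact delta_strict hσ (abs_nonneg s') hs' hs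
  have lower : ∀ (t : ℝ), |t| < 1/2 → delta σ 0 ≤ delta σ t := by
    intro t ht
    by_cases h : t = 0
    · rw [h]
    · rw [delta_abs σ t]
      exact (delta_strict hσ le_rfl (abs_pos.2 h) ht).le
  have upper : ∀ (a t : ℝ), a < 1/2 → |t| ≤ a → delta σ t ≤ delta σ a := by
    intro a t ha ht
    rw [delta_abs σ t]
    rcases lt_or_eq_of_le ht with h | h
    · exact (delta_strict hσ (abs_nonneg t) h ha).le
    · rw [h]
  refine ⟨mono, ?_, ?_⟩
  · intro D a ha ha2 s hs
    constructor
    · calc (D : ℝ) * delta σ 0 = ∑ _d : Fin D, delta σ 0 := by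
            simp [Finset.sum_const, Finset.card_univ, nsmul_eq_mul]
        _ ≤ ∑ d, delta σ (s d) := by
            refine Finset.sum_le_sum fun d _ => lower (s d) ?_
            have := hs d
            rw [Set.mem_Icc] at this
            rw [abs_lt]
            constructor <;> linarith [this.1, this.2]
    · calc ∑ d, delta σ (s d) ≤ ∑ _d : Fin D, delta σ a := by
            refine Finset.sum_le_sum fun d _ => upper a (s d) ha2 ?_
            have := hs d
            rw [Set.mem_Icc] at this
            rw [abs_le]
            exact this
        _ = (D : ℝ) * delta σ a := by
            simp [Finset.sum_const, Finset.card_univ, nsmul_eq_mul]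
  · intro D a _ _
    constructor
    · simp [Finset.sum_const, Finset.card_univ, nsmul_eq_mul]
    · intro s hs
      have : ∀ d : Fin D, delta σ (s d) = delta σ a := by
        intro d
        rcases hs d with h | h
        · rw [h]
        · rw [h, delta_neg]
      rw [Finset.sum_congr rfl fun d _ => this d]
      simp [Finset.sum_const, Finset.card_univ, nsmul_eq_mul]
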